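/- Substitution lemma for the CBN translation relation: if M ↦ M' and N ↦ N' under the CBN-to-CBPV translation relation, then M[N/x] ↦ M'[thunk(N')/x]. -/

import Mathlib

set_option linter.unusedVariables false

/-- The arithmetic operations of PCF / CBPV. -/
inductive Op | add | mul | sub | div | mod
deriving DecidableEq

def Op.den : Op → ℕ → ℕ → ℕ
  | .add, a, b => a + b
  | .mul, a, b => a * b
  | .sub, a, b => a - b
  | .div, a, b => a / b
  | .mod, a, b => a % b
namespace PCF

/-- Raw terms of call-by-name PCF in de Bruijn representation;
`proj true` is the first projection. -/
inductive Tm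
  | var : ℕ → Tm
  | num : ℕ → Tm
  | op : Op → Tm → Tm → Tm
  | ifz : Tm → Tm → Tm → Tm
  | pair : Tm → Tm → Tm
  | proj : Bool → Tm → Tm
  | lam : Tm → Tm
  | app : Tm → Tm → Tm
  | fix : Tm → Tm
deriving DecidableEq

/-- Shift (by one) the de Bruijn variables `≥ c`. -/
def shift (c : ℕ) : Tm → Tm
  | .var n => if n < c then .var n else .var (n + 1)
  | .num n => .num n
  | .op o M N => .op o (shift c M) (shift c N)
  | .ifz M P Q => .ifz (shift c M) (shift c P) (shift c Q)
  | .pair M N => .pair (shift c M) (shift c N)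
  | .proj b M => .proj b (shift c M)
  | .lam M => .lam (shift (c + 1) M)
  | .app M N => .app (shift c M) (shift c N)
  | .fix M => .fix (shift (c + 1) M)

/-- Capture-avoiding substitution of `s` for the de Bruijn variable `k`. -/
def subst (s : Tm) : ℕ → Tm → Tm
  | k, .var n => if n = k then (shift 0)^[k] s else if k < n then .var (n - 1) else .var n
  | k, .num n => .num n
  | k, .op o M N => .op o (subst s k M) (subst s k N)
  | k, .ifz M P Q => .ifz (subst s k M) (subst s k P) (subst s k Q)
  | k, .pair M N => .pair (subst s k M) (subst s k N)
  | k, .proj b M => .proj b (subst s k M)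
  | k, .lam M => .lam (subst s (k + 1) M)
  | k, .app M N => .app (subst s k M) (subst s k N)
  | k, .fix M => .fix (subst s (k + 1) M)

/-- The cost-annotated call-by-name big-step semantics `M ⇓ⁿ V`:
pair projections and function applications cost one unit. -/
inductive Eval : Tm → ℕ → Tm → Prop
  | num {n} : Eval (.num n) 0 (.num n)
  | op {o M N m n a b} : Eval M m (.num a) → Eval N n (.num b) →
      Eval (.op o M N) (m + n) (.num (o.den a b))
  | ifz_zero {M P Q m p V} : Eval M m (.num 0) → Eval P p V →
      Eval (.ifz M P Q) (m + p) V
  | ifz_succ {M P Q m q k V} : Eval M m (.num (k + 1)) → Eval Q q V →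
      Eval (.ifz M P Q) (m + q) V
  | pair {M N} : Eval (.pair M N) 0 (.pair M N)
  | proj {M M₁ M₂ m k V b} : Eval M m (.pair M₁ M₂) → Eval (cond b M₁ M₂) k V →
      Eval (.proj b M) (m + k + 1) V
  | lam {M} : Eval (.lam M) 0 (.lam M)
  | app {M N B m k V} : Eval M m (.lam B) → Eval (subst N 0 B) k V →
      Eval (.app M N) (m + k + 1) V
  | fix {M k V} : Eval (subst (.fix M) 0 M) k V → Eval (.fix M) k V

end PCF
namespace CBPV

/-- Raw terms of Call-by-Push-Value (values and computations merged), in de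
Bruijn representation.  `pairV` is the positive (value) pair, `cpair` the
negative (computation) pair, `calc'` the arithmetic construct
`calc v op w as x in N`, and `charge` the unit-cost effect. -/
inductive CTm
  | var : ℕ → CTm
  | num : ℕ → CTm
  | pairV : CTm → CTm → CTm
  | thunk : CTm → CTm
  | ret : CTm → CTm
  | lam : CTm → CTm                 -- binds 1
  | app : CTm → CTm → CTm
  | cpair : CTm → CTm → CTm
  | proj : Bool → CTm → CTm
  | split : CTm → CTm → CTm         -- second argument binds 2
  | bind : CTm → CTm → CTm          -- second argument binds 1
  | ifz : CTm → CTm → CTm → CTm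
  | calc' : Op → CTm → CTm → CTm → CTm  -- last argument binds 1
  | charge : CTm → CTm
  | force : CTm → CTm
  | cfix : CTm → CTm                -- binds 1 (a thunk variable)
deriving DecidableEq

/-- Shift (by one) the de Bruijn variables `≥ c`. -/
def cshift (c : ℕ) : CTm → CTm
  | .var n => if n < c then .var n else .var (n + 1)
  | .num n => .num n
  | .pairV V W => .pairV (cshift c V) (cshift c W)
  | .thunk M => .thunk (cshift c M)
  | .ret V => .ret (cshift c V)
  | .lam M => .lam (cshift (c + 1) M)
  | .app M V => .app (cshift c M) (cshift c V)
  | .cpair M N => .cpair (cshift c M) (cshift c N)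
  | .proj b M => .proj b (cshift c M)
  | .split V N => .split (cshift c V) (cshift (c + 2) N)
  | .bind M N => .bind (cshift c M) (cshift (c + 1) N)
  | .ifz V M N => .ifz (cshift c V) (cshift c M) (cshift c N)
  | .calc' o V W K => .calc' o (cshift c V) (cshift c W) (cshift (c + 1) K)
  | .charge M => .charge (cshift c M)
  | .force V => .force (cshift c V)
  | .cfix M => .cfix (cshift (c + 1) M)

/-- Capture-avoiding substitution of `s` for the de Bruijn variable `k`. -/
def csubst (s : CTm) : ℕ → CTm → CTm
  | k, .var n => if n = k then (cshift 0)^[k] s else if k < n then .var (n - 1) else .var n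
  | k, .num n => .num n
  | k, .pairV V W => .pairV (csubst s k V) (csubst s k W)
  | k, .thunk M => .thunk (csubst s k M)
  | k, .ret V => .ret (csubst s k V)
  | k, .lam M => .lam (csubst s (k + 1) M)
  | k, .app M V => .app (csubst s k M) (csubst s k V)
  | k, .cpair M N => .cpair (csubst s k M) (csubst s k N)
  | k, .proj b M => .proj b (csubst s k M)
  | k, .split V N => .split (csubst s k V) (csubst s (k + 2) N)
  | k, .bind M N => .bind (csubst s k M) (csubst s (k + 1) N)
  | k, .ifz V M N => .ifz (csubst s k V) (csubst s k M) (csubst s k N)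
  | k, .calc' o V W K => .calc' o (csubst s k V) (csubst s k W) (csubst s (k + 1) K)
  | k, .charge M => .charge (csubst s k M)
  | k, .force V => .force (csubst s k V)
  | k, .cfix M => .cfix (csubst s (k + 1) M)

/-- The cost-annotated big-step semantics `M ⇓ⁿ T` of CBPV: cost is incurred
only by the `charge` effect.  Terminal computations are `ret V`,
λ-abstractions, and negative pairs. -/
inductive CEval : CTm → ℕ → CTm → Prop
  | ret {V} : CEval (.ret V) 0 (.ret V)
  | lam {M} : CEval (.lam M) 0 (.lam M)
  | cpair {M N} : CEval (.cpair M N) 0 (.cpair M N)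
  | force {M n T} : CEval M n T → CEval (.force (.thunk M)) n T
  | bind {M N V m n T} : CEval M m (.ret V) → CEval (csubst V 0 N) n T →
      CEval (.bind M N) (m + n) T
  | app {M B V m n T} : CEval M m (.lam B) → CEval (csubst V 0 B) n T →
      CEval (.app M V) (m + n) T
  | proj {M M₁ M₂ b m n T} : CEval M m (.cpair M₁ M₂) → CEval (cond b M₁ M₂) n T →
      CEval (.proj b M) (m + n) T
  | split {V W N n T} : CEval (csubst W 0 (csubst V 1 N)) n T →
      CEval (.split (.pairV V W) N) n T
  | ifz_zero {M N n T} : CEval M n T → CEval (.ifz (.num 0) M N) n T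
  | ifz_succ {M N k n T} : CEval N n T → CEval (.ifz (.num (k + 1)) M N) n T
  | calc' {o a b K n T} : CEval (csubst (.num (o.den a b)) 0 K) n T →
      CEval (.calc' o (.num a) (.num b) K) n T
  | charge {M n T} : CEval M n T → CEval (.charge M) (n + 1) T
  | cfix {M n T} : CEval (csubst (.thunk (.cfix M)) 0 M) n T → CEval (.cfix M) n T

end CBPV
open CBPV in
/-- The CBN-PCF-to-CBPV translation relation `M ↦ M'`, defined inductively
with one rule per clause of the compositional translation (inserting
`charge` exactly where CBN PCF incurs a unit cost, i.e. at projections and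
applications), plus the rule allowing `M ↦ force (thunk M')`. -/
inductive CbnRel : PCF.Tm → CBPV.CTm → Prop
  | var {n} : CbnRel (.var n) (.force (.var n))
  | num {n} : CbnRel (.num n) (.ret (.num n))
  | op {o M N M' N'} : CbnRel M M' → CbnRel N N' →
      CbnRel (.op o M N)
        (.bind M' (.bind (cshift 0 N') (.calc' o (.var 1) (.var 0) (.ret (.var 0)))))
  | ifz {M P Q M' P' Q'} : CbnRel M M' → CbnRel P P' → CbnRel Q Q' →
      CbnRel (.ifz M P Q) (.bind M' (.ifz (.var 0) (cshift 0 P') (cshift 0 Q')))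
  | pair {M N M' N'} : CbnRel M M' → CbnRel N N' →
      CbnRel (.pair M N) (.cpair M' N')
  | proj {b M M'} : CbnRel M M' → CbnRel (.proj b M) (.charge (.proj b M'))
  | lam {M M'} : CbnRel M M' → CbnRel (.lam M) (.lam M')
  | app {M N M' N'} : CbnRel M M' → CbnRel N N' →
      CbnRel (.app M N) (.charge (.app M' (.thunk N')))
  | fix {M M'} : CbnRel M M' → CbnRel (.fix M) (.cfix M')
  | force_thunk {M M'} : CbnRel M M' → CbnRel M (.force (.thunk M'))

/-! Induction on `M ↦ M'`. At the substituted variable, `N ↦ N'` has to be carried under the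
binders crossed so far, which works because the translation commutes with shifting; the
resulting `force (thunk ·)` of the shifted `N'` is admitted by the rule `force_thunk`. Since the
`op` and `ifz` clauses shift their later subterms under a `bind`, the remaining cases need that
substitution commutes with shifting. -/

namespace CBPV

theorem cshift_cshift (t : CTm) {c d : ℕ} (h : d ≤ c) :
    cshift (c + 1) (cshift d t) = cshift d (cshift c t) := by
  induction t generalizing c d with
  | var n =>
    simp only [cshift]
    split_ifs <;> simp only [cshift] <;> split_ifs <;> first | rfl | omega
  | _ => simp only [cshift] <;> congr 1 <;> apply_assumption <;> omega

theorem cshift_iterate_cshift_zero (s : CTm) {i k : ℕ} (h : i ≤ k) :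
    cshift i ((cshift 0)^[k] s) = (cshift 0)^[k + 1] s := by
  induction k generalizing i with
  | zero =>
    obtain rfl : i = 0 := by omega
    rfl
  | succ k ih =>
    rw [Function.iterate_succ_apply' _ (k + 1)]
    rcases i with _ | i
    · rfl
    · rw [Function.iterate_succ_apply', cshift_cshift _ (Nat.zero_le i), ih (by omega),
      Function.iterate_succ_apply']

theorem csubst_cshift (s t : CTm) {i k : ℕ} (h : i ≤ k) :
    csubst s (k + 1) (cshift i t) = cshift i (csubst s k t) := by
  induction t generalizing i k with
  | var n =>
    by_cases hnk : n = k
    · subst hnk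
      simp [cshift, csubst, show ¬ n < i by omega, cshift_iterate_cshift_zero s h]
    · simp only [cshift, csubst]
      split_ifs <;> simp only [cshift, csubst] <;> split_ifs <;>
        first | rfl | omega | (congr 1; omega)
  | _ => simp only [cshift, csubst] <;> congr 1 <;> apply_assumption <;> omega

theorem iterate_cshift_thunk (t : CTm) (c k : ℕ) :
    (cshift c)^[k] (.thunk t) = .thunk ((cshift c)^[k] t) :=
  have h : Function.Semiconj CTm.thunk (cshift c) (cshift c) := fun _ => rfl
  ((h.iterate_right k).eq t).symm

end CBPV

namespace CbnRel

open CBPV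

theorem shift {M : PCF.Tm} {M' : CTm} (h : CbnRel M M') (c : ℕ) :
    CbnRel (PCF.shift c M) (cshift c M') := by
  induction h generalizing c with
  | @var n =>
    simp only [PCF.shift, cshift]
    split_ifs <;> exact var
  | num => exact num
  | op _ _ ihM ihN =>
    simp only [PCF.shift, cshift, cshift_cshift _ (Nat.zero_le c), Nat.zero_lt_succ,
      ite_true]
    exact op (ihM c) (ihN c)
  | ifz _ _ _ ihM ihP ihQ =>
    simp only [PCF.shift, cshift, cshift_cshift _ (Nat.zero_le c), Nat.zero_lt_succ,
      ite_true]
    exact ifz (ihM c) (ihP c) (ihQ c)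
  | pair _ _ ihM ihN => exact pair (ihM c) (ihN c)
  | proj _ ih => exact proj (ih c)
  | lam _ ih => exact lam (ih (c + 1))
  | app _ _ ihM ihN => exact app (ihM c) (ihN c)
  | fix _ ih => exact fix (ih (c + 1))
  | force_thunk _ ih => exact force_thunk (ih c)

theorem iterate_shift_zero {M : PCF.Tm} {M' : CTm} (h : CbnRel M M') (k : ℕ) :
    CbnRel ((PCF.shift 0)^[k] M) ((cshift 0)^[k] M') := by
  induction k with
  | zero => exact h
  | succ k ih =>
    rw [Function.iterate_succ_apply', Function.iterate_succ_apply']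
    exact ih.shift 0

end CbnRel

/-- substitution lemma for the CBN translation relation:
if `M ↦ M'` and `N ↦ N'` then `M[N/x] ↦ M'[thunk(N')/x]` (for any de
Bruijn variable `k`). -/
theorem cbnrel_subst {M N : PCF.Tm} {M' N' : CBPV.CTm}
    (hM : CbnRel M M') (hN : CbnRel N N') (k : ℕ) :
    CbnRel (PCF.subst N k M) (CBPV.csubst (.thunk N') k M') := by
  induction hM generalizing k with
  | @var n =>
    simp only [PCF.subst, CBPV.csubst]
    split_ifs with hnk
    · subst hnk
      rw [CBPV.iterate_cshift_thunk]
      exact .force_thunk (hN.iterate_shift_zero n)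
    all_goals exact .var
  | num => exact .num
  | op _ _ ihM ihN =>
    simp only [PCF.subst, CBPV.csubst, CBPV.csubst_cshift _ _ (Nat.zero_le k)]
    exact .op (ihM k) (ihN k)
  | ifz _ _ _ ihM ihP ihQ =>
    simp only [PCF.subst, CBPV.csubst, CBPV.csubst_cshift _ _ (Nat.zero_le k)]
    exact .ifz (ihM k) (ihP k) (ihQ k)
  | pair _ _ ihM ihN => exact .pair (ihM k) (ihN k)
  | proj _ ih => exact .proj (ih k)
  | lam _ ih => exact .lam (ih (k + 1))
  | app _ _ ihM ihN => exact .app (ihM k) (ihN k)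
  | fix _ ih => exact .fix (ih (k + 1))
  | force_thunk _ ih => exact .force_thunk (ih k)
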